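/- Let q ≥ 3, λ = 2cos(π/q), and let g_k := (U^k S)⁻¹ for k = 1, …, q-1, where U = [[λ,-1],[1,0]] and S = [[0,1],[-1,0]]. Fix a real s and define, for γ ∈ GL₂(ℝ) with nonvanishing relevant denominators, (τ_s(γ⁻¹)f)(t) = |c_γ t + d_γ|^{-2s} f(γ.t). Then for Q = [[0,1],[1,0]] and for every function f : ℝ_{>0} → ℂ and t > 0 at which all the terms are defined: ∑_{k=1}^{q-1} (τ_s(g_k) τ_s(Q) f)(t) = ∑_{k=1}^{q-1} (τ_s(Q) τ_s(g_k) f)(t). That is, the slow transfer operator ℒ_{F,s} = ∑_{k=1}^{q-1} τ_s(g_k) commutes with τ_s(Q). -/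

import Mathlib

open Real Matrix

/-- The action `τ_s(γ⁻¹)` in the line model: for a matrix `γ`,
`(act s γ f) t = |c t + d|^(-2s) · f(γ.t)`.  Thus `τ_s(g_k) = act s (U^k * S)`
since `g_k = (U^k S)⁻¹`, and `τ_s(Q) = act s Q` since `Q⁻¹ = Q`. -/
noncomputable def act (s : ℝ) (γ : Matrix (Fin 2) (Fin 2) ℝ) (f : ℝ → ℂ) (t : ℝ) : ℂ :=
  (|γ 1 0 * t + γ 1 1| ^ (-2 * s) : ℝ) * f ((γ 0 0 * t + γ 0 1) / (γ 1 0 * t + γ 1 1))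

/-!
Since `τ_s` is an anti-homomorphism, `τ_s(g_k) τ_s(Q) = τ_s(Q g_k)` and
`τ_s(Q) τ_s(g_k) = τ_s(g_k Q)`, so it suffices that conjugation by `Q` permutes the `g_k`:
`Q (U^k S) Q = U^(q-k) S`. Writing `u_n` for the Chebyshev value `U_n(cos (π/q))`, the matrix
`U^k S` is `!![u_(k-1), u_k; u_(k-2), u_(k-1)]` and `Q`-conjugation swaps its off-diagonal
entries; the claim is then the symmetry `u_m = u_n` for `m + n = q - 2`, which is
`sin ((m+1)π/q) = sin (π - (m+1)π/q)`.
-/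

def moebiusDenom (γ : Matrix (Fin 2) (Fin 2) ℝ) (t : ℝ) : ℝ := γ 1 0 * t + γ 1 1

noncomputable def moebius (γ : Matrix (Fin 2) (Fin 2) ℝ) (t : ℝ) : ℝ :=
  (γ 0 0 * t + γ 0 1) / moebiusDenom γ t

theorem act_eq (s : ℝ) (γ : Matrix (Fin 2) (Fin 2) ℝ) (f : ℝ → ℂ) (t : ℝ) :
    act s γ f t = (|moebiusDenom γ t| ^ (-2 * s) : ℝ) * f (moebius γ t) := rfl

theorem moebiusDenom_mul {γ : Matrix (Fin 2) (Fin 2) ℝ} {t : ℝ} (hγ : moebiusDenom γ t ≠ 0)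
    (δ : Matrix (Fin 2) (Fin 2) ℝ) :
    moebiusDenom (δ * γ) t = moebiusDenom δ (moebius γ t) * moebiusDenom γ t := by
  simp only [moebius, moebiusDenom, mul_apply, Fin.sum_univ_two] at hγ ⊢
  field_simp
  ring

theorem moebius_mul {γ : Matrix (Fin 2) (Fin 2) ℝ} {t : ℝ} (hγ : moebiusDenom γ t ≠ 0)
    (δ : Matrix (Fin 2) (Fin 2) ℝ) :
    moebius (δ * γ) t = moebius δ (moebius γ t) := by
  have hnum : (δ * γ) 0 0 * t + (δ * γ) 0 1
      = (δ 0 0 * moebius γ t + δ 0 1) * moebiusDenom γ t := by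
    simp only [moebius, moebiusDenom, mul_apply, Fin.sum_univ_two] at hγ ⊢
    field_simp
    ring
  rw [moebius, hnum, moebiusDenom_mul hγ, mul_div_mul_right _ _ hγ]
  rfl

theorem act_act {γ : Matrix (Fin 2) (Fin 2) ℝ} {t : ℝ} (hγ : moebiusDenom γ t ≠ 0)
    (s : ℝ) (δ : Matrix (Fin 2) (Fin 2) ℝ) (f : ℝ → ℂ) :
    act s γ (act s δ f) t = act s (δ * γ) f t := by
  rw [act_eq, act_eq, act_eq, moebius_mul hγ, moebiusDenom_mul hγ, abs_mul,
    mul_rpow (abs_nonneg _) (abs_nonneg _), Complex.ofReal_mul]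
  ring

section Chebyshev

open Polynomial Polynomial.Chebyshev

theorem Polynomial.Chebyshev.fin_two_pow_eq_U {R : Type*} [CommRing R] (x : R) (n : ℕ) :
    !![2 * x, -1; 1, 0] ^ n =
      !![(U R n).eval x, -(U R (n - 1)).eval x; (U R (n - 1)).eval x, -(U R (n - 2)).eval x] := by
  induction n with
  | zero => simp [one_fin_two]
  | succ n ih =>
    have hsucc : (U R (n + 1)).eval x = 2 * x * (U R n).eval x - (U R (n - 1)).eval x := by
      simp [U_add_one]
    have hn : (U R n).eval x = 2 * x * (U R (n - 1)).eval x - (U R (n - 2)).eval x := by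
      rw [U_eq]; simp
    rw [pow_succ, ih, mul_fin_two, Nat.cast_succ, add_sub_cancel_right,
      show (n : ℤ) + 1 - 2 = n - 1 by ring, hsucc]
    simp only [EmbeddingLike.apply_eq_iff_eq, vecCons_inj, and_true]
    refine ⟨⟨by ring, by ring⟩, by rw [hn]; ring, by ring⟩

theorem Polynomial.Chebyshev.U_real_cos_pi_div_eq {q : ℕ} (hq : 2 ≤ q) {m n : ℤ}
    (hmn : m + n = q - 2) : (U ℝ m).eval (cos (π / q)) = (U ℝ n).eval (cos (π / q)) := by
  have hq' : (2 : ℝ) ≤ q := by exact_mod_cast hq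
  have hsin : sin (π / q) ≠ 0 :=
    (sin_pos_of_pos_of_lt_pi (by positivity) (div_lt_self pi_pos (by linarith))).ne'
  refine mul_right_cancel₀ hsin ?_
  have hangle : (m + 1 : ℝ) * (π / q) = π - (n + 1) * (π / q) := by
    have hm : (m + 1 : ℝ) = q - (n + 1) := by
      have : (m : ℝ) + n = q - 2 := by exact_mod_cast hmn
      linarith
    rw [hm, sub_mul, mul_div_cancel₀ _ (by positivity)]
  rw [U_real_cos, U_real_cos, hangle, sin_pi_sub]

theorem swap_mul_pow_mul_S_eq {q k : ℕ} (hq : 2 ≤ q) (hk : k ≤ q) :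
    !![0, 1; 1, 0] * (!![2 * cos (π / q), -1; 1, 0] ^ k * !![0, 1; -1, 0])
      = !![2 * cos (π / q), -1; 1, 0] ^ (q - k) * !![0, 1; -1, 0] * !![0, 1; 1, 0] := by
  rw [fin_two_pow_eq_U, fin_two_pow_eq_U, Nat.cast_sub hk]
  simp only [mul_fin_two, EmbeddingLike.apply_eq_iff_eq, vecCons_inj, and_true, mul_zero,
    zero_mul, mul_one, one_mul, add_zero, zero_add, mul_neg, neg_neg]
  refine ⟨⟨?_, ?_⟩, ?_, ?_⟩ <;> exact U_real_cos_pi_div_eq hq (by ring)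

end Chebyshev

theorem Finset.sum_Icc_one_sub_reflect {M : Type*} [AddCommMonoid M] (f : ℕ → M) (q : ℕ) :
    ∑ k ∈ Icc 1 (q - 1), f (q - k) = ∑ k ∈ Icc 1 (q - 1), f k := by
  refine sum_nbij' (q - ·) (q - ·) ?_ ?_ ?_ ?_ fun _ _ => rfl <;>
    intro k hk <;> simp only [mem_Icc] at * <;> omega

theorem stmt_18_general (q : ℕ) (lam : ℝ) (hlam : lam = 2 * Real.cos (Real.pi / q))
    (U S Q : Matrix (Fin 2) (Fin 2) ℝ)
    (hU : U = !![lam, -1; 1, 0])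
    (hS : S = !![0, 1; -1, 0])
    (hQ : Q = !![0, 1; 1, 0])
    (s : ℝ) (f : ℝ → ℂ) (t : ℝ) (ht : 0 < t)
    (hden : ∀ k ∈ Finset.Icc 1 (q - 1),
      (U ^ k * S) 1 0 * t + (U ^ k * S) 1 1 ≠ 0) :
    ∑ k ∈ Finset.Icc 1 (q - 1), act s (U ^ k * S) (act s Q f) t
      = ∑ k ∈ Finset.Icc 1 (q - 1), act s Q (act s (U ^ k * S) f) t := by
  conv_rhs => rw [← Finset.sum_Icc_one_sub_reflect]
  refine Finset.sum_congr rfl fun k hk => ?_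
  have hk' := Finset.mem_Icc.mp hk
  have hQt : moebiusDenom Q t ≠ 0 := by simp [moebiusDenom, hQ, ht.ne']
  calc act s (U ^ k * S) (act s Q f) t
      = act s (Q * (U ^ k * S)) f t := act_act (hden k hk) s Q f
    _ = act s (U ^ (q - k) * S * Q) f t := by
      rw [hU, hS, hQ, hlam, swap_mul_pow_mul_S_eq (by omega) (by omega)]
    _ = act s Q (act s (U ^ (q - k) * S) f) t := (act_act hQt s _ f).symm

theorem stmt_18 (q : ℕ) (hq : 3 ≤ q) (lam : ℝ) (hlam : lam = 2 * Real.cos (Real.pi / q))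
    (U S Q : Matrix (Fin 2) (Fin 2) ℝ)
    (hU : U = !![lam, -1; 1, 0])
    (hS : S = !![0, 1; -1, 0])
    (hQ : Q = !![0, 1; 1, 0])
    (s : ℝ) (f : ℝ → ℂ) (t : ℝ) (ht : 0 < t)
    (hden : ∀ k ∈ Finset.Icc 1 (q - 1),
      (U ^ k * S) 1 0 * t + (U ^ k * S) 1 1 ≠ 0)
    (hval : ∀ k ∈ Finset.Icc 1 (q - 1),
      ((U ^ k * S) 0 0 * t + (U ^ k * S) 0 1) / ((U ^ k * S) 1 0 * t + (U ^ k * S) 1 1) ≠ 0)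
    (hden' : ∀ k ∈ Finset.Icc 1 (q - 1),
      (U ^ k * S) 1 0 * t⁻¹ + (U ^ k * S) 1 1 ≠ 0) :
    ∑ k ∈ Finset.Icc 1 (q - 1), act s (U ^ k * S) (act s Q f) t
      = ∑ k ∈ Finset.Icc 1 (q - 1), act s Q (act s (U ^ k * S) f) t :=
  stmt_18_general q lam hlam U S Q hU hS hQ s f t ht hden
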